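/- arXiv:2407.05237 — 2 statements merged into one kernel-verified Lean document; each statement's English description precedes it below -/
import Mathlib

section
/- Nonnegativity and vanishing of the residual sequence (Lemma A.2(b)). Let L > 1 be real and T ≥ 1 an integer. Define S_T = Σ_{i=0}^{T−1} L^{2i}, b_t = (L^{T−t}/S_T)·L^{T−1} for t ∈ [T], and R_t = L^{t−1} − Σ_{i=1}^{t} b_i L^{t−i}. Then R_t ≥ 0 for every t ∈ [T], and R_T = 0. -/
open MeasureTheory ProbabilityTheory Finset
open scoped ENNReal NNReal RealInnerProductSpace Classical

noncomputable section

/-- `E n` is the Euclidean space `ℝⁿ`. -/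
abbrev En (n : ℕ) := EuclideanSpace ℝ (Fin n)

/-- The Rényi divergence of order `α` between two measures. -/
def renyiDiv {n : ℕ} (α : ℝ) (μ ν : Measure (En n)) : EReal :=
  if μ ≪ ν then ((α - 1)⁻¹ : ℝ) * ENNReal.log (∫⁻ x, μ.rnDeriv ν x ^ α ∂ν)
  else ⊤

/-- `π` is a coupling of `μ` and `ν`. -/
def IsCoupling {n : ℕ} (π : Measure (En n × En n)) (μ ν : Measure (En n)) : Prop :=
  π.map Prod.fst = μ ∧ π.map Prod.snd = ν

/-- The `∞`-Wasserstein distance between `μ` and `ν` is at most `τ`, i.e. there is a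
coupling under which the two coordinates are a.s. within distance `τ`. -/
def WInfLE {n : ℕ} (μ ν : Measure (En n)) (τ : ℝ) : Prop :=
  ∃ π : Measure (En n × En n), IsProbabilityMeasure π ∧ IsCoupling π μ ν ∧
    ∀ᵐ p ∂π, ‖p.1 - p.2‖ ≤ τ

/-- The shifted Rényi divergence `D_α^{(τ)}(μ‖ν)`. -/
def shiftedRenyiDiv {n : ℕ} (α τ : ℝ) (μ ν : Measure (En n)) : EReal :=
  sInf ((fun γ => renyiDiv α γ ν) '' {γ : Measure (En n) | IsProbabilityMeasure γ ∧ WInfLE μ γ τ})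

/-- The centered Gaussian measure `N(0, σ²I)` on `ℝⁿ`. -/
def gaussianE (n : ℕ) (σ : ℝ) : Measure (En n) :=
  Measure.map (MeasurableEquiv.toLp 2 (Fin n → ℝ))
    (Measure.pi fun _ : Fin n => gaussianReal 0 ⟨σ ^ 2, sq_nonneg σ⟩)

/-- `x` is the proximal point of `ψ` at `z`, i.e. `x = prox_ψ(z)`. -/
def IsProxPt {n : ℕ} (ψ : En n → EReal) (z x : En n) : Prop :=
  ∀ y, ψ x + ((‖x - z‖ ^ 2 / 2 : ℝ) : EReal) ≤ ψ y + ((‖y - z‖ ^ 2 / 2 : ℝ) : EReal)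

/-- `ψ` is a proper lower-semicontinuous convex (extended-real-valued) function. -/
def ProperLscConvex {n : ℕ} (ψ : En n → EReal) : Prop :=
  LowerSemicontinuous ψ ∧
  (∀ x y : En n, ∀ a b : ℝ, 0 ≤ a → 0 ≤ b → a + b = 1 →
    ψ (a • x + b • y) ≤ (a : EReal) * ψ x + (b : EReal) * ψ y) ∧
  (∃ x, ψ x ≠ ⊤) ∧ (∀ x, ψ x ≠ ⊥)

/-- The (effective) domain of an extended-real-valued function. -/
def edom {n : ℕ} (ψ : En n → EReal) : Set (En n) := {x | ψ x ≠ ⊤}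

/-- The quantity `θ_L(s)`. -/
def theta (L : ℝ) (s : ℕ) : ℝ :=
  if s = 0 then 0 else L ^ (2 * (s - 1)) / ∑ j ∈ Finset.range s, L ^ (2 * j)

/-- Euclidean projection onto the closed ball of radius `C` centered at the origin. -/
def clipC {n : ℕ} (C : ℝ) (x : En n) : En n :=
  if ‖x‖ ≤ C then x else (C / ‖x‖) • x

/-- Assumption (A2) for a single function `f` relative to the domain `D`. -/
def A2 {n : ℕ} (D : Set (En n)) (f : En n → ℝ) (m M : ℝ) : Prop :=
  (∃ U, IsOpen U ∧ D ⊆ U ∧ ∀ x ∈ U, DifferentiableAt ℝ f x) ∧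
  ∀ x ∈ D, ∀ y ∈ D,
    -(m / 2) * ‖x - y‖ ^ 2 ≤ f x - f y - ⟪gradient f y, x - y⟫ ∧
    f x - f y - ⟪gradient f y, x - y⟫ ≤ M / 2 * ‖x - y‖ ^ 2

/-- The constant `L_λ = sqrt(1 + 2λm(1 + m/(M+m)))`. -/
def Llam (lam m M : ℝ) : ℝ := Real.sqrt (1 + 2 * lam * m * (1 + m / (M + m)))

/-- The batch `B_t` of indices (0-indexed) used at iteration `t` of cyclically-sampled DP-SGD. -/
def batchIdx (k b t : ℕ) : Finset ℕ := Finset.Ico (b * (t - 1) % k) (b * (t - 1) % k + b)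

/-- One (pre-noise, pre-prox) DP-SGD displacement `x ↦ x - λ g_t(x)` with clipped gradients. -/
def sgdStep {n : ℕ} (k b : ℕ) (C lam : ℝ) (f : ℕ → En n → ℝ) (t : ℕ) (x : En n) : En n :=
  x - lam • ((b : ℝ)⁻¹ • ∑ i ∈ batchIdx k b t, clipC C (gradient (f i) x))

/-- The process `X` consists of DP-SGD iterates for losses `f`, regularizer `h`,
noise `N`, and initial point `x0`. -/
def DPSGDIterates {n : ℕ} {Ω : Type} [MeasurableSpace Ω]
    (h : En n → EReal) (f : ℕ → En n → ℝ) (k b : ℕ) (C lam : ℝ)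
    (N : ℕ → Ω → En n) (x0 : En n) (X : ℕ → Ω → En n) : Prop :=
  (∀ t, Measurable (X t)) ∧ (∀ ω, X 0 ω = x0) ∧
  ∀ t : ℕ, 1 ≤ t → ∀ ω,
    IsProxPt (fun z => (lam : EReal) * h z) (sgdStep k b C lam f t (X (t - 1) ω) + N t ω) (X t ω)

/-- The noise sequence `N` is an i.i.d. sequence of `N(0,σ²I)` Gaussians. -/
def GaussianNoise {n : ℕ} {Ω : Type} [MeasurableSpace Ω] (P : Measure Ω) (σ : ℝ)
    (N : ℕ → Ω → En n) : Prop :=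
  (∀ t, Measurable (N t)) ∧ iIndepFun N P ∧
  ∀ t, P.map (N t) = gaussianE n σ

/-- Each `f i`, `i < k`, is differentiable on an open set containing `D`. -/
def DiffOnOpen {n : ℕ} (D : Set (En n)) (f : ℕ → En n → ℝ) (k : ℕ) : Prop :=
  ∀ i < k, ∃ U, IsOpen U ∧ D ⊆ U ∧ ∀ x ∈ U, DifferentiableAt ℝ (f i) x

/-- Condition (★) with parameters `(L, ζ, s)` for the maps `φ, φ'` on the common domain `D`. -/
def StarCond {n : ℕ} (D : Set (En n)) (φ φ' : En n → En n) (L ζ s : ℝ) : Prop :=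
  (∀ u ∈ D, ‖φ' u - φ u‖ ≤ s) ∧
  (∀ x ∈ D, ∀ y ∈ D, ‖φ x - φ y‖ ≤ L * ‖x - y‖ + ζ) ∧
  (∀ x ∈ D, ∀ y ∈ D, ‖φ' x - φ' y‖ ≤ L * ‖x - y‖ + ζ)

/-! With `q = L²`, the sum `∑_{i ≤ t} b_i L^{t-i}` collapses to
`L^{t-1} q^{T-t} (1 + q + ⋯ + q^{t-1}) / S`, while `S = 1 + q + ⋯ + q^{T-1}`. The numerator
`q^{T-t} + ⋯ + q^{T-1}` is a tail of `S`, so `R_t ≥ 0`, with equality at `t = T`. -/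

theorem Finset.sum_Icc_one_sub_eq_sum_range {M : Type*} [AddCommMonoid M] (f : ℕ → M)
    (t : ℕ) :
    ∑ i ∈ Icc 1 t, f (t - i) = ∑ j ∈ range t, f j := by
  rw [← Ico_add_one_right_eq_Icc, sum_Ico_reflect f 1 le_rfl, Nat.sub_self,
    Nat.add_sub_cancel, Nat.Ico_zero_eq_range]

theorem pow_mul_geom_sum_le_geom_sum_add {R : Type*} [Semiring R] [PartialOrder R]
    [IsOrderedRing R] {x : R} (hx : 0 ≤ x) (m n : ℕ) :
    x ^ m * ∑ j ∈ range n, x ^ j ≤ ∑ j ∈ range (m + n), x ^ j := by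
  rw [sum_range_add, mul_sum]
  simp only [pow_add]
  exact le_add_of_nonneg_left (sum_nonneg fun j _ => pow_nonneg hx j)

theorem sum_Icc_pow_div_mul_pow {K : Type*} [Field K] (L S : K) {t T : ℕ} (ht : 1 ≤ t)
    (htT : t ≤ T) :
    ∑ i ∈ Icc 1 t, L ^ (T - i) / S * L ^ (T - 1) * L ^ (t - i)
      = L ^ (t - 1) * ((L ^ 2) ^ (T - t) * ∑ j ∈ range t, (L ^ 2) ^ j) / S := by
  have hterm : ∀ i ∈ Icc 1 t, L ^ (T - i) / S * L ^ (T - 1) * L ^ (t - i)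
      = L ^ (t - 1) * (L ^ 2) ^ (T - t) / S * (L ^ 2) ^ (t - i) := by
    intro i hi
    have hit : i ≤ t := (mem_Icc.mp hi).2
    rw [show T - i = (T - t) + (t - i) by omega, show T - 1 = (t - 1) + (T - t) by omega]
    ring
  rw [sum_congr rfl hterm, ← mul_sum, sum_Icc_one_sub_eq_sum_range (fun j => (L ^ 2) ^ j)]
  ring

/-- Lemma A.2(b): nonnegativity and vanishing of the residual sequence. -/
theorem residuals_nonneg_and_vanish (L : ℝ) (hL : 1 < L) (T : ℕ) (hT : 1 ≤ T)
    (S : ℝ) (hS : S = ∑ i ∈ Finset.range T, L ^ (2 * i))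
    (bseq : ℕ → ℝ) (hb : ∀ t, bseq t = L ^ (T - t) / S * L ^ (T - 1))
    (R : ℕ → ℝ)
    (hR : ∀ t, R t = L ^ (t - 1) - ∑ i ∈ Finset.Icc 1 t, bseq i * L ^ (t - i)) :
    (∀ t ∈ Finset.Icc 1 T, 0 ≤ R t) ∧ R T = 0 := by
  simp only [pow_mul] at hS
  have hS_pos : 0 < S :=
    hS ▸ sum_pos (fun j _ => by positivity) (nonempty_range_iff.mpr (by omega))
  have hR_eq : ∀ t, 1 ≤ t → t ≤ T →
      R t = L ^ (t - 1)
        - L ^ (t - 1) * ((L ^ 2) ^ (T - t) * ∑ j ∈ range t, (L ^ 2) ^ j) / S := by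
    intro t ht htT
    simp only [hR, hb, sum_Icc_pow_div_mul_pow L S ht htT]
  refine ⟨fun t ht => ?_, ?_⟩
  · obtain ⟨ht, htT⟩ := mem_Icc.mp ht
    have hratio : (L ^ 2) ^ (T - t) * ∑ j ∈ range t, (L ^ 2) ^ j ≤ S := by
      simpa only [hS, Nat.sub_add_cancel htT] using
        pow_mul_geom_sum_le_geom_sum_add (sq_nonneg L) (T - t) t
    rw [hR_eq t ht htT, sub_nonneg, mul_div_assoc]
    exact mul_le_of_le_one_right (pow_nonneg (zero_le_one.trans hL.le) _)
      ((div_le_one hS_pos).mpr hratio)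
  · rw [hR_eq T hT le_rfl, Nat.sub_self, pow_zero, one_mul, ← hS,
      mul_div_cancel_right₀ _ hS_pos.ne', sub_self]

end
end

section
/- Optimality of the chosen residuals (Appendix B). Let L > 1 be real, T ≥ 1 an integer, and c ≥ 0. For nonnegative reals a_1,…,a_T, define R̃_t = c·L^{t−1} − Σ_{i=1}^{t} a_i L^{t−i}. If R̃_t ≥ 0 for all t ∈ [T−1] and R̃_T = 0, then Σ_{t=1}^{T} a_t² ≥ c² θ_L(T); moreover, equality holds for the choice a_t = c·L^{T−1}·L^{T−t} / (Σ_{i=0}^{T−1} L^{2i}), which satisfies the constraints. In particular, this choice of a_1,…,a_T minimizes Σ_{t=1}^T a_t² subject to the constraints. -/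
open MeasureTheory ProbabilityTheory Finset
open scoped ENNReal NNReal RealInnerProductSpace Classical

noncomputable section

/-!
With weights `w_i = L^(T-i)`, the terminal constraint `R̃_T = 0` says `∑ a_i w_i = c L^(T-1)`,
so Cauchy–Schwarz gives `c² L^(2(T-1)) ≤ (∑ a_i²) (∑ w_i²)` with `∑ w_i² = ∑_{j<T} L^(2j)`,
which is the lower bound. Equality holds for `a ∥ w`, which is the proposed choice; for it the
intermediate remainders have the closed form
`R̃_t = c L^(t-1) (∑_{j<T-t} L^(2j)) / ∑_{j<T} L^(2j)`, nonnegative and vanishing at `t = T`.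
-/

/-- The paper's `R̃_t`. -/
def remainder (c L : ℝ) (a : ℕ → ℝ) (t : ℕ) : ℝ :=
  c * L ^ (t - 1) - ∑ i ∈ Icc 1 t, a i * L ^ (t - i)

def optimalResidual (c L : ℝ) (T t : ℕ) : ℝ :=
  c * L ^ (T - 1) * L ^ (T - t) / ∑ i ∈ range T, L ^ (2 * i)

lemma sum_range_pow_two_mul_pos (L : ℝ) {n : ℕ} (hn : n ≠ 0) :
    0 < ∑ j ∈ range n, L ^ (2 * j) := by
  refine sum_pos' (fun j _ => ?_) ⟨0, mem_range.2 (Nat.pos_of_ne_zero hn), by simp⟩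
  rw [pow_mul]
  exact pow_nonneg (sq_nonneg L) j

lemma sum_range_pow_two_mul_eq_add (L : ℝ) {t T : ℕ} (htT : t ≤ T) :
    ∑ j ∈ range T, L ^ (2 * j)
      = ∑ j ∈ range (T - t), L ^ (2 * j) + L ^ (2 * (T - t)) * ∑ j ∈ range t, L ^ (2 * j) := by
  conv_lhs => rw [← Nat.sub_add_cancel htT, sum_range_add]
  simp only [mul_add, pow_add, mul_sum]

lemma sum_Icc_pow_sub_mul_pow_sub (L : ℝ) {t T : ℕ} (htT : t ≤ T) :
    ∑ i ∈ Icc 1 t, L ^ (T - i) * L ^ (t - i) = L ^ (T - t) * ∑ j ∈ range t, L ^ (2 * j) := by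
  rw [mul_sum, ← Ico_add_one_right_eq_Icc, sum_Ico_eq_sum_range, Nat.add_sub_cancel,
    ← sum_range_reflect]
  refine sum_congr rfl fun j hj => ?_
  rw [mem_range] at hj
  rw [← pow_add, ← pow_add]
  congr 1
  omega

lemma theta_of_ne_zero (L : ℝ) {T : ℕ} (hT : T ≠ 0) :
    theta L T = (L ^ (T - 1)) ^ 2 / ∑ j ∈ range T, L ^ (2 * j) := by
  rw [theta, if_neg hT, ← pow_mul, mul_comm]

lemma sq_sum_mul_div_le_sum_sq {ι : Type*} (s : Finset ι) (a w : ι → ℝ)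
    (hw : 0 < ∑ i ∈ s, w i ^ 2) :
    (∑ i ∈ s, a i * w i) ^ 2 / ∑ i ∈ s, w i ^ 2 ≤ ∑ i ∈ s, a i ^ 2 :=
  (div_le_iff₀ hw).2 (sum_mul_sq_le_sq_mul_sq s a w)

theorem sq_mul_theta_le_sum_sq {c L : ℝ} {T : ℕ} (hT : T ≠ 0) {a : ℕ → ℝ}
    (hR : remainder c L a T = 0) :
    c ^ 2 * theta L T ≤ ∑ t ∈ Icc 1 T, a t ^ 2 := by
  have hw : ∑ i ∈ Icc 1 T, (L ^ (T - i)) ^ 2 = ∑ j ∈ range T, L ^ (2 * j) := by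
    simpa [Nat.sub_self, ← sq] using sum_Icc_pow_sub_mul_pow_sub L (le_refl T)
  have hsum : ∑ i ∈ Icc 1 T, a i * L ^ (T - i) = c * L ^ (T - 1) := by
    unfold remainder at hR
    linarith
  have hCS := sq_sum_mul_div_le_sum_sq (Icc 1 T) a (fun i => L ^ (T - i))
    (hw ▸ sum_range_pow_two_mul_pos L hT)
  rwa [hsum, hw, mul_pow, mul_div_assoc, ← theta_of_ne_zero L hT] at hCS

lemma optimalResidual_nonneg {c L : ℝ} (hc : 0 ≤ c) (hL : 0 ≤ L) (T t : ℕ) :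
    0 ≤ optimalResidual c L T t := by
  unfold optimalResidual
  positivity

lemma remainder_optimalResidual (c L : ℝ) {t T : ℕ} (ht : 1 ≤ t) (htT : t ≤ T) :
    remainder c L (optimalResidual c L T) t
      = c * L ^ (t - 1) * (∑ j ∈ range (T - t), L ^ (2 * j)) / ∑ j ∈ range T, L ^ (2 * j) := by
  have hS := (sum_range_pow_two_mul_pos L (by omega : T ≠ 0)).ne'
  have hpow : L ^ (T - 1) = L ^ (t - 1) * L ^ (T - t) := by
    rw [← pow_add]
    congr 1
    omega
  have hsum : ∑ i ∈ Icc 1 t, optimalResidual c L T i * L ^ (t - i)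
      = c * L ^ (T - 1) * L ^ (T - t) * (∑ j ∈ range t, L ^ (2 * j))
          / ∑ j ∈ range T, L ^ (2 * j) := by
    simp only [optimalResidual, div_mul_eq_mul_div, mul_assoc, ← sum_div, ← mul_sum,
      sum_Icc_pow_sub_mul_pow_sub L htT]
  rw [remainder, hsum, eq_div_iff hS, sub_mul, div_mul_cancel₀ _ hS,
    sum_range_pow_two_mul_eq_add L htT, hpow]
  ring

lemma remainder_optimalResidual_nonneg {c L : ℝ} (hc : 0 ≤ c) (hL : 0 ≤ L) {t T : ℕ}
    (ht : 1 ≤ t) (htT : t ≤ T) :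
    0 ≤ remainder c L (optimalResidual c L T) t := by
  rw [remainder_optimalResidual c L ht htT]
  positivity

lemma remainder_optimalResidual_self (c L : ℝ) {T : ℕ} (hT : T ≠ 0) :
    remainder c L (optimalResidual c L T) T = 0 := by
  rw [remainder_optimalResidual c L (Nat.one_le_iff_ne_zero.2 hT) le_rfl]
  simp

theorem sum_optimalResidual_sq (c L : ℝ) {T : ℕ} (hT : T ≠ 0) :
    ∑ t ∈ Icc 1 T, optimalResidual c L T t ^ 2 = c ^ 2 * theta L T := by
  have hS := (sum_range_pow_two_mul_pos L hT).ne'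
  have hw := sum_Icc_pow_sub_mul_pow_sub L (le_refl T)
  rw [Nat.sub_self, pow_zero, one_mul] at hw
  simp only [optimalResidual, div_pow, mul_pow, ← sum_div, ← mul_sum, ← sq] at hw ⊢
  rw [hw, theta_of_ne_zero L hT]
  field_simp

/-- Appendix B: optimality of the chosen residuals. -/
theorem residuals_optimal (L : ℝ) (hL : 1 < L) (T : ℕ) (hT : 1 ≤ T) (c : ℝ) (hc : 0 ≤ c) :
    (∀ a : ℕ → ℝ, (∀ t ∈ Finset.Icc 1 T, 0 ≤ a t) →
      (∀ t ∈ Finset.Icc 1 (T - 1),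
        0 ≤ c * L ^ (t - 1) - ∑ i ∈ Finset.Icc 1 t, a i * L ^ (t - i)) →
      c * L ^ (T - 1) - ∑ i ∈ Finset.Icc 1 T, a i * L ^ (T - i) = 0 →
      c ^ 2 * theta L T ≤ ∑ t ∈ Finset.Icc 1 T, a t ^ 2) ∧
    (∀ astar : ℕ → ℝ,
      (∀ t, astar t = c * L ^ (T - 1) * L ^ (T - t) / ∑ i ∈ Finset.range T, L ^ (2 * i)) →
      (∀ t ∈ Finset.Icc 1 T, 0 ≤ astar t) ∧
      (∀ t ∈ Finset.Icc 1 (T - 1),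
        0 ≤ c * L ^ (t - 1) - ∑ i ∈ Finset.Icc 1 t, astar i * L ^ (t - i)) ∧
      c * L ^ (T - 1) - ∑ i ∈ Finset.Icc 1 T, astar i * L ^ (T - i) = 0 ∧
      ∑ t ∈ Finset.Icc 1 T, astar t ^ 2 = c ^ 2 * theta L T) := by
  have hT0 : T ≠ 0 := Nat.one_le_iff_ne_zero.1 hT
  have hL0 : 0 ≤ L := by linarith
  refine ⟨fun a _ _ hR => sq_mul_theta_le_sum_sq hT0 hR, fun astar hdef => ?_⟩
  obtain rfl : astar = optimalResidual c L T := funext hdef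
  refine ⟨fun t _ => optimalResidual_nonneg hc hL0 T t, fun t ht => ?_,
    remainder_optimalResidual_self c L hT0, sum_optimalResidual_sq c L hT0⟩
  obtain ⟨ht1, htT⟩ := mem_Icc.1 ht
  exact remainder_optimalResidual_nonneg hc hL0 ht1 (by omega)
end
end
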